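/- For n ≥ 1 and k ≥ 2, every k-dimensional balanced ballot path of length kn has semisymmetric height at least ⌈k/2⌉·⌊k/2⌋, and this minimum is attained by the path repeating (e_1, e_2, ..., e_k) n times. -/
import Mathlib

open scoped Classical

/-- Number of steps among the first `i` steps of `P` equal to basis vector `j`. -/
def cnt (k n : ℕ) (P : Fin (k*n) → Fin k) (j : Fin k) (i : ℕ) : ℕ :=
  (Finset.univ.filter (fun t : Fin (k*n) => (t : ℕ) < i ∧ P t = j)).card

/-- `P` is a `k`-dimensional balanced ballot path of length `k*n`:
each basis vector appears exactly `n` times, and every partial sum is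
weakly decreasing in coordinates. -/
def IsBBP (k n : ℕ) (P : Fin (k*n) → Fin k) : Prop :=
  (∀ j : Fin k, cnt k n P j (k*n) = n) ∧
  (∀ i ≤ k*n, ∀ j j' : Fin k, j ≤ j' → cnt k n P j' i ≤ cnt k n P j i)

/-- Semisymmetric height `g_k` of the `i`-th intermediate point of `P`. -/
def ptHt (k n : ℕ) (P : Fin (k*n) → Fin k) (i : ℕ) : ℤ :=
  ∑ j : Fin k, ((k : ℤ) - 1 - 2*(j : ℕ)) * (cnt k n P j i)

/-- The semisymmetric height of path `P` is at most `u`. -/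
def HeightLE (k n : ℕ) (P : Fin (k*n) → Fin k) (u : ℤ) : Prop :=
  ∀ i ≤ k*n, ptHt k n P i ≤ u

/-- The semisymmetric height of path `P` is exactly `u`. -/
def HeightEq (k n : ℕ) (P : Fin (k*n) → Fin k) (u : ℤ) : Prop :=
  HeightLE k n P u ∧ ∃ i ≤ k*n, ptHt k n P i = u

/-- Gauss-type sum for the coefficients. -/
lemma sumA (k r : ℕ) : ∑ j ∈ Finset.range r, ((k:ℤ) - 1 - 2*j) = r*k - r^2 := by
  induction r with
  | zero => simp
  | succ r ih => rw [Finset.sum_range_succ, ih]; push_cast; ring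

lemma rk_le (k r : ℕ) : (r:ℤ)*k - (r:ℤ)^2 ≤ ((k/2) * ((k+1)/2) : ℕ) := by
  have h2 : k % 2 = 0 ∨ k % 2 = 1 := by omega
  rcases h2 with h | h
  · have h1 : (k:ℤ) = 2 * ((k/2 : ℕ) : ℤ) := by omega
    have h3 : (((k/2) * ((k+1)/2) : ℕ) : ℤ) = ((k/2 :ℕ):ℤ) * ((k/2 :ℕ):ℤ) := by
      have : (k+1)/2 = k/2 := by omega
      rw [this]; push_cast; ring
    rw [h3]
    nlinarith [sq_nonneg ((k:ℤ) - 2*r)]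
  · have h1 : (k:ℤ) = 2 * ((k/2 : ℕ) : ℤ) + 1 := by omega
    have h3 : (((k/2) * ((k+1)/2) : ℕ) : ℤ) = ((k/2 :ℕ):ℤ) * (((k/2 :ℕ):ℤ) + 1) := by
      have : (k+1)/2 = k/2 + 1 := by omega
      rw [this]; push_cast; ring
    rw [h3]
    set m : ℤ := ((k/2 : ℕ) : ℤ)
    rcases le_or_gt (r:ℤ) m with hd | hd
    · nlinarith
    · nlinarith

lemma cnt_succ {k n : ℕ} (P : Fin (k*n) → Fin k) (j : Fin k) {i : ℕ} (h : i < k*n) :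
    cnt k n P j (i+1) = cnt k n P j i + if P ⟨i, h⟩ = j then 1 else 0 := by
  classical
  unfold cnt
  rw [Finset.card_filter, Finset.card_filter,
    show (if P ⟨i, h⟩ = j then 1 else 0) =
      ∑ t : Fin (k*n), if t = ⟨i, h⟩ then (if P t = j then 1 else 0) else 0 by
        simp [Finset.sum_ite_eq'],
    ← Finset.sum_add_distrib]
  refine Finset.sum_congr rfl fun t _ => ?_
  rcases eq_or_ne t ⟨i, h⟩ with rfl | hne
  · simp
  · have hti : (t : ℕ) ≠ i := fun hh => hne (Fin.ext hh)
    have : ((t:ℕ) < i + 1) = ((t:ℕ) < i) := by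
      simp only [eq_iff_iff]; omega
    simp [hne, this]

lemma ptHt_succ {k n : ℕ} (P : Fin (k*n) → Fin k) {i : ℕ} (h : i < k*n) :
    ptHt k n P (i+1) = ptHt k n P i + ((k:ℤ) - 1 - 2*((P ⟨i, h⟩ : Fin k) : ℕ)) := by
  unfold ptHt
  have : ∀ j : Fin k, ((k : ℤ) - 1 - 2*(j : ℕ)) * (cnt k n P j (i+1)) =
      ((k : ℤ) - 1 - 2*(j : ℕ)) * (cnt k n P j i)
       + (if P ⟨i, h⟩ = j then ((k : ℤ) - 1 - 2*(j : ℕ)) else 0) := by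
    intro j
    rw [cnt_succ P j h]
    split_ifs with hp <;> push_cast <;> ring
  simp_rw [this]
  rw [Finset.sum_add_distrib, Finset.sum_ite_eq]
  simp

lemma ptHt_canon {k n : ℕ} (hk : 2 ≤ k) (Q : Fin (k*n) → Fin k)
    (hQ : ∀ t : Fin (k*n), ((Q t : ℕ)) = (t : ℕ) % k) :
    ∀ i ≤ k*n, ptHt k n Q i = ∑ j ∈ Finset.range (i % k), ((k:ℤ) - 1 - 2*j) := by
  intro i hi
  induction i with
  | zero => simp [ptHt, cnt]
  | succ i ih =>
    have hi' : i < k*n := hi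
    rw [ptHt_succ Q hi', ih (le_of_lt hi')]
    have hv : ((Q ⟨i, hi'⟩ : Fin k) : ℕ) = i % k := hQ _
    rw [hv]
    have h1 : (i+1) % k = (i % k + 1) % k := by
      conv_lhs => rw [← Nat.mod_add_mod]
    by_cases hr : i % k + 1 = k
    · rw [h1, hr, Nat.mod_self]
      have : i % k = k - 1 := by omega
      rw [this]
      have h2 : ∑ j ∈ Finset.range k, ((k:ℤ) - 1 - 2*j) = 0 := by
        rw [sumA]; push_cast; ring
      have h3 := Finset.sum_range_succ (fun j : ℕ => ((k:ℤ) - 1 - 2*j)) (k-1)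
      have hk1 : k - 1 + 1 = k := by omega
      rw [hk1] at h3
      simp only [Finset.sum_range_zero]
      linarith [h2, h3]
    · have : i % k + 1 < k := by have := Nat.mod_lt i (show 0 < k by omega); omega
      rw [h1, Nat.mod_eq_of_lt this, Finset.sum_range_succ]

lemma absA (k : ℕ) (hk : 2 ≤ k) :
    ∑ j ∈ Finset.range k, |(k:ℤ) - 1 - 2*j| = 2 * (((k/2) * ((k+1)/2) : ℕ) : ℤ) := by
  have hck : (k+1)/2 ≤ k := by omega
  have hsplit : ∑ j ∈ Finset.range k, |(k:ℤ) - 1 - 2*j| =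
      (∑ j ∈ Finset.range ((k+1)/2), |(k:ℤ) - 1 - 2*j|) +
      ∑ j ∈ Finset.Ico ((k+1)/2) k, |(k:ℤ) - 1 - 2*j| :=
    (Finset.sum_range_add_sum_Ico _ hck).symm
  have h1 : ∑ j ∈ Finset.range ((k+1)/2), |(k:ℤ) - 1 - 2*j|
      = ((k+1)/2 : ℕ)*(k:ℤ) - ((k+1)/2 : ℕ)^2 := by
    rw [← sumA k ((k+1)/2)]
    refine Finset.sum_congr rfl fun j hj => ?_
    rw [Finset.mem_range] at hj
    have h2j : 2*j + 1 ≤ k := by omega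
    exact abs_of_nonneg (by omega)
  have h2 : ∑ j ∈ Finset.Ico ((k+1)/2) k, |(k:ℤ) - 1 - 2*j|
      = ((k+1)/2 : ℕ)*(k:ℤ) - ((k+1)/2 : ℕ)^2 := by
    have e1 : ∑ j ∈ Finset.Ico ((k+1)/2) k, |(k:ℤ) - 1 - 2*j| =
        ∑ j ∈ Finset.Ico ((k+1)/2) k, (-((k:ℤ) - 1 - 2*j)) := by
      refine Finset.sum_congr rfl fun j hj => ?_
      rw [Finset.mem_Ico] at hj
      have h2j : k ≤ 2*j + 1 := by omega
      exact abs_of_nonpos (by omega)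
    rw [e1, Finset.sum_neg_distrib, Finset.sum_Ico_eq_sub _ hck, sumA, sumA]
    ring
  rw [hsplit, h1, h2, Nat.cast_mul]
  have hmc : ((k/2 : ℕ):ℤ) + ((k+1)/2 : ℕ) = (k:ℤ) := by omega
  linear_combination (-2*(((k+1)/2 : ℕ):ℤ)) * hmc

lemma key (k : ℕ) (hk : 2 ≤ k) (x : Fin k → ℕ)
    (hmono : ∀ j j' : Fin k, j ≤ j' → x j' ≤ x j)
    (hstrict : x ⟨(k+1)/2, by omega⟩ + 1 ≤ x ⟨k/2 - 1, by omega⟩) :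
    (((k/2) * ((k+1)/2) : ℕ) : ℤ) ≤ ∑ j : Fin k, ((k:ℤ) - 1 - 2*(j:ℕ)) * (x j) := by
  have hrev : ∑ j : Fin k, ((k:ℤ) - 1 - 2*(j:ℕ)) * (x j)
      = ∑ j : Fin k, (-((k:ℤ) - 1 - 2*(j:ℕ))) * (x (Fin.rev j)) := by
    refine (Fintype.sum_equiv (Fin.revPerm) _ _ fun j => ?_).symm
    have hj := j.isLt
    have hvr : (((Fin.rev j : Fin k) : ℕ) : ℤ) = (k:ℤ) - 1 - (j:ℕ) := by
      rw [Fin.val_rev]; omega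
    simp only [Fin.revPerm_apply]
    rw [hvr]; ring
  have h2S : 2 * ∑ j : Fin k, ((k:ℤ) - 1 - 2*(j:ℕ)) * (x j)
      = ∑ j : Fin k, ((k:ℤ) - 1 - 2*(j:ℕ)) * ((x j : ℤ) - (x (Fin.rev j) : ℤ)) := by
    rw [two_mul]
    nth_rewrite 2 [hrev]
    rw [← Finset.sum_add_distrib]
    exact Finset.sum_congr rfl fun j _ => by ring
  have hterm : ∀ j : Fin k, |(k:ℤ) - 1 - 2*(j:ℕ)| ≤
      ((k:ℤ) - 1 - 2*(j:ℕ)) * ((x j : ℤ) - (x (Fin.rev j) : ℤ)) := by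
    intro j
    have hj := j.isLt
    have hvr : ((Fin.rev j : Fin k) : ℕ) = k - (j + 1 : ℕ) := Fin.val_rev j
    rcases lt_trichotomy (2*(j:ℕ)+1) k with hlt | heq | hgt
    · have hjm : (j:ℕ) < k/2 := by omega
      have ha : (1:ℤ) ≤ (k:ℤ) - 1 - 2*(j:ℕ) := by omega
      have hx1 : x ⟨k/2 - 1, by omega⟩ ≤ x j := by
        refine hmono _ _ ?_
        rw [Fin.le_def]; simp; omega
      have hx2 : x (Fin.rev j) ≤ x ⟨(k+1)/2, by omega⟩ := by
        refine hmono _ _ ?_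
        rw [Fin.le_def]; simp [hvr]; omega
      have hchain : x (Fin.rev j) + 1 ≤ x j :=
        le_trans (Nat.add_le_add_right hx2 1) (le_trans hstrict hx1)
      have hd : (1:ℤ) ≤ (x j : ℤ) - (x (Fin.rev j) : ℤ) := by omega
      rw [abs_of_nonneg (by omega)]
      nlinarith
    · have hz : (k:ℤ) - 1 - 2*(j:ℕ) = 0 := by omega
      rw [hz]; simp
    · have hjc : (k+1)/2 ≤ (j:ℕ) := by omega
      have ha : (k:ℤ) - 1 - 2*(j:ℕ) ≤ -1 := by omega
      have hx1 : x ⟨k/2 - 1, by omega⟩ ≤ x (Fin.rev j) := by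
        refine hmono _ _ ?_
        rw [Fin.le_def]; simp [hvr]; omega
      have hx2 : x j ≤ x ⟨(k+1)/2, by omega⟩ := by
        refine hmono _ _ ?_
        rw [Fin.le_def]; simp; omega
      have hchain : x j + 1 ≤ x (Fin.rev j) :=
        le_trans (Nat.add_le_add_right hx2 1) (le_trans hstrict hx1)
      have hd : (x j : ℤ) - (x (Fin.rev j) : ℤ) ≤ -1 := by omega
      rw [abs_of_nonpos (by omega)]
      nlinarith
  have hsum : ∑ j : Fin k, |(k:ℤ) - 1 - 2*(j:ℕ)| ≤
      2 * ∑ j : Fin k, ((k:ℤ) - 1 - 2*(j:ℕ)) * (x j) := by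
    rw [h2S]
    exact Finset.sum_le_sum fun j _ => hterm j
  have habs : ∑ j : Fin k, |(k:ℤ) - 1 - 2*(j:ℕ)|
      = 2 * (((k/2) * ((k+1)/2) : ℕ) : ℤ) := by
    rw [Fin.sum_univ_eq_sum_range (fun j : ℕ => |(k:ℤ) - 1 - 2*(j:ℕ)|) k]
    exact absA k hk
  linarith [hsum, habs.le, habs.ge]

theorem stmt4 (k n : ℕ) (hk : 2 ≤ k) (hn : 1 ≤ n) :
    (∀ P : Fin (k*n) → Fin k, IsBBP k n P →
      ∃ i ≤ k*n, (((k/2) * ((k+1)/2) : ℕ) : ℤ) ≤ ptHt k n P i) ∧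
    HeightEq k n (fun t => ⟨(t : ℕ) % k, Nat.mod_lt _ (by omega)⟩)
      (((k/2) * ((k+1)/2) : ℕ) : ℤ) := by
  have hkn : k ≤ k * n := Nat.le_mul_of_pos_right k (by omega)
  have hm1 : k/2 - 1 < k := by omega
  have hcK : (k+1)/2 < k := by omega
  constructor
  · intro P hP
    obtain ⟨hcount, hmono⟩ := hP
    have hpos : 0 < cnt k n P ⟨k/2 - 1, hm1⟩ (k*n) := by rw [hcount]; omega
    obtain ⟨t, ht⟩ := Finset.card_pos.mp hpos
    rw [Finset.mem_filter] at ht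
    obtain ⟨-, htlt, htp⟩ := ht
    refine ⟨(t:ℕ) + 1, by omega, ?_⟩
    have e1 : cnt k n P ⟨k/2 - 1, hm1⟩ ((t:ℕ)+1) = cnt k n P ⟨k/2 - 1, hm1⟩ (t:ℕ) + 1 := by
      rw [cnt_succ P _ htlt]
      have : P ⟨(t:ℕ), htlt⟩ = ⟨k/2 - 1, hm1⟩ := htp
      rw [if_pos this]
    have e2 : cnt k n P ⟨(k+1)/2, hcK⟩ ((t:ℕ)+1) = cnt k n P ⟨(k+1)/2, hcK⟩ (t:ℕ) := by
      rw [cnt_succ P _ htlt]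
      have hne : P ⟨(t:ℕ), htlt⟩ ≠ ⟨(k+1)/2, hcK⟩ := by
        rw [htp]
        intro hcontra
        have := congrArg Fin.val hcontra
        simp at this
        omega
      rw [if_neg hne]
      omega
    have e3 : cnt k n P ⟨(k+1)/2, hcK⟩ (t:ℕ) ≤ cnt k n P ⟨k/2 - 1, hm1⟩ (t:ℕ) := by
      refine hmono (t:ℕ) (by omega) _ _ ?_
      rw [Fin.le_def]; simp; omega
    have hstr : cnt k n P ⟨(k+1)/2, hcK⟩ ((t:ℕ)+1) + 1 ≤
        cnt k n P ⟨k/2 - 1, hm1⟩ ((t:ℕ)+1) := by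
      rw [e1, e2]; omega
    exact key k hk (fun j => cnt k n P j ((t:ℕ)+1))
      (fun j j' hj => hmono ((t:ℕ)+1) (by omega) j j' hj) hstr
  · constructor
    · intro i hi
      rw [ptHt_canon hk _ (fun t => rfl) i hi, sumA]
      exact rk_le k (i % k)
    · have hmlt : k/2 < k := by omega
      refine ⟨k/2, by omega, ?_⟩
      rw [ptHt_canon hk _ (fun t => rfl) _ (by omega), Nat.mod_eq_of_lt hmlt, sumA,
        Nat.cast_mul]
      have hmc : ((k/2 : ℕ):ℤ) + ((k+1)/2 : ℕ) = (k:ℤ) := by omega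
      linear_combination (-((k/2:ℕ):ℤ)) * hmc
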